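/- arXiv:1712.07152 — 5 statements merged into one kernel-verified Lean document; each statement's English description precedes it below -/
import Mathlib

section
/- In H_α, the element r1 = a(e1 ⊗ e2 − e2 ⊗ e1) is an antisymmetric solution of the associative Yang–Baxter equation r12 r13 + r13 r23 − r23 r12 = 0, for any scalar a. -/
open Finset

/-- Structure constants of the extended Heisenberg algebra `H_α`:
`e₁ · e₃ = e₂`, `e₃ · e₁ = α e₂`, other basis products zero. -/
def cH (α : ℂ) (i j k : Fin 3) : ℂ :=
  if i = 0 ∧ j = 2 ∧ k = 1 then 1 else if i = 2 ∧ j = 0 ∧ k = 1 then α else 0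

/-- The associative Yang–Baxter equation `r₁₂r₁₃ + r₁₃r₂₃ − r₂₃r₁₂ = 0`, written
in components for `r = Σ rᵢⱼ eᵢ ⊗ eⱼ` in a 3-dimensional algebra with structure
constants `c` (so `eᵢ · eⱼ = Σ_k c i j k • e_k`):
`(r₁₂r₁₃)ᵤᵥᵥ = Σᵢⱼ rᵢᵥ rⱼ𝓌 c i j u`, `(r₁₃r₂₃)ᵤᵥ𝓌 = Σᵢⱼ rᵤᵢ rᵥⱼ c i j w`,
`(r₂₃r₁₂)ᵤᵥ𝓌 = Σᵢⱼ rᵢ𝓌 rᵤⱼ c i j v`. -/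
def AYBE3 (c : Fin 3 → Fin 3 → Fin 3 → ℂ) (r : Fin 3 → Fin 3 → ℂ) : Prop :=
  ∀ u v w : Fin 3,
    (∑ i, ∑ j, r i v * r j w * c i j u)
      + (∑ i, ∑ j, r u i * r v j * c i j w)
      - (∑ i, ∑ j, r i w * r u j * c i j v) = 0

/-- `r₁ = a (e₁ ⊗ e₂ − e₂ ⊗ e₁)` is an antisymmetric solution of the associative
Yang–Baxter equation in `H_α`, for any scalar `a`. -/
theorem r1_antisymmetric_AYBE_solution (α a : ℂ) :
    (∀ i j : Fin 3,
      (fun i j : Fin 3 => if i = 0 ∧ j = 1 then a else if i = 1 ∧ j = 0 then -a else 0) i j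
        = -(fun i j : Fin 3 => if i = 0 ∧ j = 1 then a else if i = 1 ∧ j = 0 then -a else 0) j i) ∧
    AYBE3 (cH α)
      (fun i j : Fin 3 => if i = 0 ∧ j = 1 then a else if i = 1 ∧ j = 0 then -a else 0) := by
  constructor
  · intro i j
    fin_cases i <;> fin_cases j <;> simp
  · intro u v w
    fin_cases u <;> fin_cases v <;> fin_cases w <;>
      simp [Fin.sum_univ_three, cH]
end

section
/- In H_α, the element r2 = a(e2 ⊗ e3 − e3 ⊗ e2) is an antisymmetric solution of the associative Yang–Baxter equation, for any scalar a. -/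
open Finset

/-- `r₂ = a (e₂ ⊗ e₃ − e₃ ⊗ e₂)` is an antisymmetric solution of the associative
Yang–Baxter equation in `H_α`, for any scalar `a`. -/
theorem r2_antisymmetric_AYBE_solution (α a : ℂ) :
    (∀ i j : Fin 3,
      (fun i j : Fin 3 => if i = 1 ∧ j = 2 then a else if i = 2 ∧ j = 1 then -a else 0) i j
        = -(fun i j : Fin 3 => if i = 1 ∧ j = 2 then a else if i = 2 ∧ j = 1 then -a else 0) j i) ∧
    AYBE3 (cH α)
      (fun i j : Fin 3 => if i = 1 ∧ j = 2 then a else if i = 2 ∧ j = 1 then -a else 0) := by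
  constructor
  · intro i j; fin_cases i <;> fin_cases j <;> simp
  · intro u v w
    fin_cases u <;> fin_cases v <;> fin_cases w <;>
      simp [cH, Fin.sum_univ_three]
end

section
/- Every antisymmetric solution r = Σ a_{ij} e_i ⊗ e_j of the associative Yang–Baxter equation in H_α (α ≠ −1) is of the form a(e1 ⊗ e2 − e2 ⊗ e1) or a(e2 ⊗ e3 − e3 ⊗ e2); i.e., an antisymmetric r solves the AYBE only if a13 = a31 = 0 and a12 a23 = 0 (given a21 = −a12, a32 = −a23). -/
open Finset

/-- Every antisymmetric solution of the AYBE in `H_α` (`α ≠ −1`) has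
`a₁₃ = a₃₁ = 0` and `a₁₂ a₂₃ = 0`, i.e. it is of the form
`a(e₁⊗e₂ − e₂⊗e₁)` or `a(e₂⊗e₃ − e₃⊗e₂)`. -/
theorem antisymmetric_AYBE_solutions_classification (α : ℂ) (hα : α ≠ -1)
    (r : Fin 3 → Fin 3 → ℂ) (hanti : ∀ i j : Fin 3, r i j = - r j i)
    (hr : AYBE3 (cH α) r) :
    r 0 2 = 0 ∧ r 2 0 = 0 ∧ r 0 1 * r 1 2 = 0 := by
  have h1 := hr 0 1 2
  have h2 := hr 1 1 1
  simp only [cH, Fin.sum_univ_three, hanti 1 0, hanti 2 0, hanti 2 1,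
    show ((0:Fin 3) = 2) = False by simp, show ((1:Fin 3) = 2) = False by simp,
    show ((2:Fin 3) = 0) = False by simp, show ((2:Fin 3) = 1) = False by simp,
    show ((0:Fin 3) = 1) = False by simp, show ((1:Fin 3) = 0) = False by simp,
    show ((0:Fin 3) = 0) = True by simp, show ((1:Fin 3) = 1) = True by simp,
    show ((2:Fin 3) = 2) = True by simp, true_and, false_and, and_true, and_false,
    if_true, if_false, mul_zero, zero_mul, add_zero, zero_add, mul_one, one_mul] at h1 h2
  have h22 : r 2 2 = 0 := by have h := hanti 2 2; linear_combination (1/2 : ℂ) * h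
  have hb : r 0 2 = 0 := by
    have : r 0 2 * r 0 2 = 0 := by linear_combination -h1 - (r 0 0 * α) * h22
    exact mul_self_eq_zero.mp this
  refine ⟨hb, by rw [hanti 2 0, hb, neg_zero], ?_⟩
  have hsum : (1 : ℂ) + α ≠ 0 := fun h => hα (by linear_combination h)
  have : (1 + α) * (r 0 1 * r 1 2) = 0 := by linear_combination (-1/3 : ℂ) * h2
  rcases mul_eq_zero.mp this with h | h
  · exact absurd h hsum
  · exact h
end

section
/- With the associative product ∘ on H_α* defined by e2* ∘ e2* = −(α+1) a e3* (all other dual basis products zero), the sextuple (H_α, H_α*, R*, L*, R*_∘, L*_∘) is a matched pair of associative algebras; equivalently, for all x ∈ H_α and a*, b* ∈ H_α*: R*(x)(a* ∘ b*) = R*(L*_∘(a*)x)b* + (R*(x)a*) ∘ b*, and R*(R*_∘(a*)x)b* + (L*(x)a*) ∘ b* = L*(L*_∘(b*)x)a* + a* ∘ (R*(x)b*). -/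
open Finset

/-- Structure constants of `∘` on `H_α*`: `e₂* ∘ e₂* = −(α+1) a e₃*`. -/
def dH (α a : ℂ) (i j k : Fin 3) : ℂ :=
  if i = 1 ∧ j = 1 ∧ k = 2 then -(α + 1) * a else 0

/-- The product `∘` on `H_α*` in coordinates. -/
noncomputable def circDual (α a : ℂ) (u v : Fin 3 → ℂ) : Fin 3 → ℂ :=
  fun k => ∑ i, ∑ j, u i * v j * dH α a i j k

/-- The dual of left multiplication in `H_α`, acting on `H_α*`:
`⟨L*(x)u*, eⱼ⟩ = ⟨u*, x · eⱼ⟩`. -/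
noncomputable def Lstar (α : ℂ) (x u : Fin 3 → ℂ) : Fin 3 → ℂ :=
  fun j => ∑ i, ∑ k, x i * cH α i j k * u k

/-- The dual of right multiplication in `H_α`, acting on `H_α*`:
`⟨R*(x)u*, eⱼ⟩ = ⟨u*, eⱼ · x⟩`. -/
noncomputable def Rstar (α : ℂ) (x u : Fin 3 → ℂ) : Fin 3 → ℂ :=
  fun j => ∑ i, ∑ k, x i * cH α j i k * u k

/-- The dual of left multiplication in `(H_α*, ∘)`, acting on `H_α`:
`⟨L*_∘(u*)x, eⱼ*⟩ = ⟨x, u* ∘ eⱼ*⟩`. -/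
noncomputable def LstarCirc (α a : ℂ) (u x : Fin 3 → ℂ) : Fin 3 → ℂ :=
  fun j => ∑ i, ∑ k, u i * dH α a i j k * x k

/-- The dual of right multiplication in `(H_α*, ∘)`, acting on `H_α`. -/
noncomputable def RstarCirc (α a : ℂ) (u x : Fin 3 → ℂ) : Fin 3 → ℂ :=
  fun j => ∑ i, ∑ k, u i * dH α a j i k * x k

/-- `(H_α, H_α*, R*, L*, R*_∘, L*_∘)` is a matched pair of associative
algebras: the two compatibility equations hold for all `x ∈ H_α`,
`a*, b* ∈ H_α*`. -/
theorem matched_pair_Heisenberg (α a : ℂ) :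
    (∀ (x u v : Fin 3 → ℂ),
        Rstar α x (circDual α a u v)
          = Rstar α (LstarCirc α a u x) v + circDual α a (Rstar α x u) v) ∧
    (∀ (x u v : Fin 3 → ℂ),
        Rstar α (RstarCirc α a u x) v + circDual α a (Lstar α x u) v
          = Lstar α (LstarCirc α a v x) u + circDual α a u (Rstar α x v)) := by
  constructor <;> intro x u v <;> funext j <;>
    simp only [Rstar, Lstar, circDual, LstarCirc, RstarCirc, cH, dH, Pi.add_apply,
      Fin.sum_univ_three] <;>
    fin_cases j <;> simp <;> ring
end

section
/- On the semidirect product algebra H_0 ⋉_{R*, 0} H_0* with product (x + a*) ∗ (y + b*) = x·y + R*(x)b*, the element r = Σ_{i=1}^{3} (e_i ⊗ e_i* − e_i* ⊗ e_i) is an antisymmetric solution of the associative Yang–Baxter equation r12 r13 + r13 r23 − r23 r12 = 0. -/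
open Finset

/-- Structure constants of the semidirect product `H₀ ⋉_{R*,0} H₀*` on the basis
`e₁,e₂,e₃,e₁*,e₂*,e₃*` (indices `0,…,5`): the only nonzero products are
`e₁ ∗ e₃ = e₂` and `e₃ ∗ e₂* = e₁*`. -/
def cSemi (i j k : Fin 6) : ℂ :=
  if i = 0 ∧ j = 2 ∧ k = 1 then 1 else if i = 2 ∧ j = 4 ∧ k = 3 then 1 else 0

/-- The associative Yang–Baxter equation in components, for a 6-dimensional
algebra with structure constants `c` and `r = Σ rᵢⱼ eᵢ ⊗ eⱼ`. -/
def AYBE6 (c : Fin 6 → Fin 6 → Fin 6 → ℂ) (r : Fin 6 → Fin 6 → ℂ) : Prop :=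
  ∀ u v w : Fin 6,
    (∑ i, ∑ j, r i v * r j w * c i j u)
      + (∑ i, ∑ j, r u i * r v j * c i j w)
      - (∑ i, ∑ j, r i w * r u j * c i j v) = 0

/-- `r = Σᵢ (eᵢ ⊗ eᵢ* − eᵢ* ⊗ eᵢ)` as a coefficient matrix. -/
def rSemi : Fin 6 → Fin 6 → ℂ :=
  fun i j => if (i : ℕ) + 3 = (j : ℕ) then 1
    else if (j : ℕ) + 3 = (i : ℕ) then -1 else 0

def cZ (i j k : Fin 6) : ℤ :=
  if i = 0 ∧ j = 2 ∧ k = 1 then 1 else if i = 2 ∧ j = 4 ∧ k = 3 then 1 else 0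

def rZ : Fin 6 → Fin 6 → ℤ :=
  fun i j => if (i : ℕ) + 3 = (j : ℕ) then 1
    else if (j : ℕ) + 3 = (i : ℕ) then -1 else 0

lemma cSemi_eq (i j k : Fin 6) : cSemi i j k = (cZ i j k : ℂ) := by
  unfold cSemi cZ; split_ifs <;> norm_num

lemma rSemi_eq (i j : Fin 6) : rSemi i j = (rZ i j : ℂ) := by
  unfold rSemi rZ; split_ifs <;> norm_num

/-- On `H₀ ⋉_{R*,0} H₀*`, the element `r = Σᵢ (eᵢ ⊗ eᵢ* − eᵢ* ⊗ eᵢ)` is an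
antisymmetric solution of the associative Yang–Baxter equation. -/
theorem rSemi_antisymmetric_AYBE_solution :
    (∀ i j : Fin 6, rSemi i j = - rSemi j i) ∧ AYBE6 cSemi rSemi := by
  constructor
  · intro i j
    rw [rSemi_eq, rSemi_eq]
    have : ∀ i j : Fin 6, rZ i j = - rZ j i := by decide
    rw [this]; push_cast; ring
  · intro u v w
    have key : ∀ u v w : Fin 6,
        (∑ i, ∑ j, rZ i v * rZ j w * cZ i j u)
          + (∑ i, ∑ j, rZ u i * rZ v j * cZ i j w)
          - (∑ i, ∑ j, rZ i w * rZ u j * cZ i j v) = 0 := by decide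
    have := key u v w
    simp only [rSemi_eq, cSemi_eq]
    exact_mod_cast congrArg (fun z : ℤ => (z : ℂ)) this
end
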